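/- arXiv:2512.06875 — 4 statements merged into one kernel-verified Lean document; each statement's English description precedes it below -/
import Mathlib

section
/- Let A ∈ ℝ^{n×n}, B ∈ ℝ^{n×m}, K ∈ ℝ^{m×n}, F ∈ ℝ^{n̂×n̂}, L̂ ∈ ℝ^{m×n̂} with σ(F) ∩ σ(A+BK) = ∅. Suppose P solves P F = (A+BK) P + B(L̂ − K P) and the pair (F, L̂) is observable. Then the pair (F, L̂ − K P) is observable. -/
open Matrix

/-- The spectrum of a real square matrix: its set of complex eigenvalues. -/
noncomputable def matSpec {k : ℕ} (A : Matrix (Fin k) (Fin k) ℝ) : Set ℂ :=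
  spectrum ℂ (A.map (algebraMap ℝ ℂ))

/-- PBH observability of a pair (F, L) of real matrices: every complex eigenvector
of F is not in the kernel of L. -/
def Observable {k m : ℕ} (F : Matrix (Fin k) (Fin k) ℝ) (L : Matrix (Fin m) (Fin k) ℝ) : Prop :=
  ∀ (μ : ℂ) (ε : Fin k → ℂ), ε ≠ 0 →
    (F.map (algebraMap ℝ ℂ)).mulVec ε = μ • ε →
    (L.map (algebraMap ℝ ℂ)).mulVec ε ≠ 0

lemma mem_spec_of_eig {k : ℕ} (M : Matrix (Fin k) (Fin k) ℂ) (μ : ℂ) (ε : Fin k → ℂ)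
    (hε : ε ≠ 0) (h : M.mulVec ε = μ • ε) : μ ∈ spectrum ℂ M := by
  rw [spectrum.mem_iff]
  intro hu
  have hu' : IsUnit (μ • (1 : Matrix (Fin k) (Fin k) ℂ) - M) := by
    simpa [Algebra.algebraMap_eq_smul_one] using hu
  have hinj := Matrix.mulVec_injective_iff_isUnit.mpr hu'
  apply hε
  have : (μ • (1 : Matrix (Fin k) (Fin k) ℂ) - M).mulVec ε =
      (μ • (1 : Matrix (Fin k) (Fin k) ℂ) - M).mulVec 0 := by
    simp [sub_mulVec, smul_mulVec, h]
  exact hinj this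

/-- if σ(F) ∩ σ(A+BK) = ∅, P solves PF = (A+BK)P + B(L̂ − KP), and
(F, L̂) is observable, then (F, L̂ − KP) is observable. -/
theorem observability_preserved {n n' m : ℕ}
    (A : Matrix (Fin n) (Fin n) ℝ) (B : Matrix (Fin n) (Fin m) ℝ)
    (K : Matrix (Fin m) (Fin n) ℝ) (F : Matrix (Fin n') (Fin n') ℝ)
    (L : Matrix (Fin m) (Fin n') ℝ)
    (hspec : matSpec F ∩ matSpec (A + B * K) = ∅)
    (P : Matrix (Fin n) (Fin n') ℝ)
    (hP : P * F = (A + B * K) * P + B * (L - K * P))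
    (hobs : Observable F L) :
    Observable F (L - K * P) := by
  intro μ ε hε hFe hcontra
  -- complexify
  set φ := algebraMap ℝ ℂ
  have hμF : μ ∈ matSpec F := mem_spec_of_eig _ μ ε hε hFe
  have hμA : μ ∉ matSpec (A + B * K) := by
    intro hmem
    have : μ ∈ matSpec F ∩ matSpec (A + B * K) := ⟨hμF, hmem⟩
    rw [hspec] at this
    exact this
  -- complexified Sylvester equation applied to ε
  have hPc : (P.map φ) * (F.map φ) =
      ((A + B * K).map φ) * (P.map φ) + (B.map φ) * ((L - K * P).map φ) := by
    rw [← Matrix.map_mul, ← Matrix.map_mul, ← Matrix.map_mul,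
      ← Matrix.map_add _ (fun a b => map_add φ a b), hP]
  have key : ((A + B * K).map φ).mulVec ((P.map φ).mulVec ε) =
      μ • ((P.map φ).mulVec ε) := by
    have h1 : ((P.map φ) * (F.map φ)).mulVec ε = μ • ((P.map φ).mulVec ε) := by
      rw [← Matrix.mulVec_mulVec, hFe, Matrix.mulVec_smul]
    rw [hPc] at h1
    rw [Matrix.add_mulVec, ← Matrix.mulVec_mulVec, ← Matrix.mulVec_mulVec,
      hcontra, Matrix.mulVec_zero, add_zero] at h1
    exact h1
  -- μ not in spectrum of A+BK ⇒ Pε = 0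
  have hPe : (P.map φ).mulVec ε = 0 := by
    by_contra hne
    exact hμA (mem_spec_of_eig _ μ _ hne key)
  -- then Lε = (L-KP)ε + K(Pε) = 0, contradict hobs
  apply hobs μ ε hε hFe
  have : (L.map φ).mulVec ε = ((L - K * P).map φ).mulVec ε
      + ((K.map φ) * (P.map φ)).mulVec ε := by
    rw [← Matrix.map_mul, ← Matrix.add_mulVec,
      ← Matrix.map_add _ (fun a b => map_add φ a b), sub_add_cancel]
  rw [this, hcontra, ← Matrix.mulVec_mulVec, hPe, Matrix.mulVec_zero, add_zero]
end

section
/- Suppose M A = F M + G N, G Γ = M B, and C = H M. Let x : ℝ → ℝ^n and ξ : ℝ → ℝ^{n̂} be differentiable functions satisfying ẋ = A x + B u and ξ̇ = F ξ + G v with v = N x + Γ u for a given input u : ℝ → ℝ^m. Then the error ε_s = ξ − M x satisfies ε̇_s = F ε_s, and the output error ψ − y = H ε_s where y = C x and ψ = H ξ. -/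
open Matrix

/-- under MA = FM + GN, GΓ = MB, C = HM, along trajectories of the
two systems interconnected via v = Nx + Γu, the error ε_s = ξ − Mx satisfies
ε̇_s = F ε_s, and ψ − y = H ε_s. -/
theorem error_dynamics_M_relation {n n' m m' p : ℕ}
    (A : Matrix (Fin n) (Fin n) ℝ) (B : Matrix (Fin n) (Fin m) ℝ)
    (C : Matrix (Fin p) (Fin n) ℝ) (F : Matrix (Fin n') (Fin n') ℝ)
    (G : Matrix (Fin n') (Fin m') ℝ) (H : Matrix (Fin p) (Fin n') ℝ)
    (M : Matrix (Fin n') (Fin n) ℝ) (N : Matrix (Fin m') (Fin n) ℝ)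
    (Γ : Matrix (Fin m') (Fin m) ℝ)
    (h1 : M * A = F * M + G * N)
    (h2 : G * Γ = M * B)
    (h3 : C = H * M)
    (u : ℝ → Fin m → ℝ) (v : ℝ → Fin m' → ℝ)
    (x : ℝ → Fin n → ℝ) (ξ : ℝ → Fin n' → ℝ)
    (hv : ∀ t, v t = N.mulVec (x t) + Γ.mulVec (u t))
    (hx : ∀ t, HasDerivAt x (A.mulVec (x t) + B.mulVec (u t)) t)
    (hξ : ∀ t, HasDerivAt ξ (F.mulVec (ξ t) + G.mulVec (v t)) t) :
    (∀ t, HasDerivAt (fun s => ξ s - M.mulVec (x s))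
        (F.mulVec (ξ t - M.mulVec (x t))) t) ∧
    (∀ t, H.mulVec (ξ t) - C.mulVec (x t) = H.mulVec (ξ t - M.mulVec (x t))) := by
  constructor
  · intro t
    have hMx : HasDerivAt (fun s => M.mulVec (x s))
        (M.mulVec (A.mulVec (x t) + B.mulVec (u t))) t := by
      have L := (Matrix.mulVecLin M).toContinuousLinearMap.hasFDerivAt (x := x t)
      exact ((Matrix.mulVecLin M).toContinuousLinearMap.hasFDerivAt.comp_hasDerivAt t (hx t))
    have key : F.mulVec (ξ t) + G.mulVec (v t) - M.mulVec (A.mulVec (x t) + B.mulVec (u t))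
        = F.mulVec (ξ t - M.mulVec (x t)) := by
      rw [hv t]
      have e1 : M.mulVec (A.mulVec (x t)) = F.mulVec (M.mulVec (x t)) + G.mulVec (N.mulVec (x t)) := by
        rw [Matrix.mulVec_mulVec, Matrix.mulVec_mulVec, Matrix.mulVec_mulVec, h1,
          Matrix.add_mulVec]
      have e2 : G.mulVec (Γ.mulVec (u t)) = M.mulVec (B.mulVec (u t)) := by
        rw [Matrix.mulVec_mulVec, Matrix.mulVec_mulVec, h2]
      rw [Matrix.mulVec_add, Matrix.mulVec_add, Matrix.mulVec_sub, e1, ← e2]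
      abel
    exact key ▸ (hξ t).sub hMx
  · intro t
    rw [h3, Matrix.mulVec_sub, ← Matrix.mulVec_mulVec]
end

section
/- Let Π solve Π S = A Π + B L with σ(S) ∩ σ(A) = ∅, and let G be any matrix with σ(S) ∩ σ(S − GL) = ∅. Then the identity matrix I_{n̂} is the unique solution P of the Sylvester equation P S = (S − G L) P + G L; consequently the reduced model ξ̇ = (S − GL)ξ + G u, ψ = CΠ ξ has moment (CΠ)·I = CΠ at (S, L), equal to the moment of the full-order system. -/
open Matrix

open Polynomial

lemma pow_intertwine {k : ℕ} (M N X : Matrix (Fin k) (Fin k) ℂ)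
    (h : X * M = N * X) : ∀ j, X * M ^ j = N ^ j * X := by
  intro j
  induction j with
  | zero => simp
  | succ j ih =>
    rw [pow_succ, ← mul_assoc, ih, mul_assoc, h, ← mul_assoc, ← pow_succ]

lemma aeval_intertwine {k : ℕ} (M N X : Matrix (Fin k) (Fin k) ℂ)
    (h : X * M = N * X) (p : ℂ[X]) :
    X * (Polynomial.aeval M p) = (Polynomial.aeval N p) * X := by
  induction p using Polynomial.induction_on' with
  | add p q hp hq => simp [map_add, mul_add, add_mul, hp, hq]
  | monomial j a =>
    simp only [aeval_monomial, Algebra.algebraMap_eq_smul_one, smul_mul_assoc, one_mul,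
      mul_smul_comm]
    rw [pow_intertwine M N X h j]

lemma root_mem_spectrum {k : ℕ} (M : Matrix (Fin k) (Fin k) ℂ) (a : ℂ)
    (ha : a ∈ M.charpoly.roots) : a ∈ spectrum ℂ M := by
  have h0 : M.charpoly.eval a = 0 := by
    exact (Polynomial.mem_roots (Matrix.charpoly_monic M).ne_zero).1 ha
  have hdet : (Matrix.scalar (Fin k) a - M).det = 0 := by
    rw [Matrix.charpoly, eval_det, Matrix.matPolyEquiv_charmatrix] at h0
    simpa using h0
  rw [spectrum.mem_iff]
  intro hunit
  rw [Matrix.isUnit_iff_isUnit_det] at hunit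
  rw [Algebra.algebraMap_eq_smul_one] at hunit
  have : (a • (1 : Matrix (Fin k) (Fin k) ℂ)) = Matrix.scalar (Fin k) a := by
    simp [Matrix.scalar, Matrix.smul_one_eq_diagonal]
  rw [this, hdet] at hunit
  exact hunit.ne_zero rfl

lemma sylvester_homog_zero {k : ℕ} (M N X : Matrix (Fin k) (Fin k) ℂ)
    (hdisj : spectrum ℂ M ∩ spectrum ℂ N = ∅)
    (h : X * M = N * X) : X = 0 := by
  have h1 : X * Polynomial.aeval M M.charpoly = Polynomial.aeval N M.charpoly * X :=
    aeval_intertwine M N X h _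
  rw [Matrix.aeval_self_charpoly, mul_zero] at h1
  have hu : IsUnit (Polynomial.aeval N M.charpoly) := by
    have hfac := (IsAlgClosed.splits M.charpoly).eq_prod_roots_of_monic (Matrix.charpoly_monic M)
    have hfac' : M.charpoly =
        (M.charpoly.roots.toList.map fun a => Polynomial.X - C a).prod := by
      conv_lhs => rw [hfac, ← Multiset.coe_toList M.charpoly.roots]
      rw [Multiset.map_coe, Multiset.prod_coe]
    have hform : Polynomial.aeval N M.charpoly =
        (M.charpoly.roots.toList.map fun a => N - a • 1).prod := by
      conv_lhs => rw [hfac']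
      rw [map_list_prod]
      congr 1
      rw [List.map_map]
      refine List.map_congr_left ?_
      intro a _
      simp [Algebra.algebraMap_eq_smul_one]
    rw [hform]
    refine List.prod_isUnit ?_
    intro x hx
    obtain ⟨a, ha', rfl⟩ := List.mem_map.1 hx
    have ha : a ∈ M.charpoly.roots := (Multiset.mem_toList).1 ha'
    have haM : a ∈ spectrum ℂ M := root_mem_spectrum M a ha
    have haN : a ∉ spectrum ℂ N := by
      intro hN
      exact Set.eq_empty_iff_forall_notMem.1 hdisj a ⟨haM, hN⟩
    rw [spectrum.notMem_iff, Algebra.algebraMap_eq_smul_one] at haN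
    have : N - a • 1 = -(a • (1 : Matrix (Fin k) (Fin k) ℂ) - N) := (neg_sub _ _).symm
    rw [this]
    exact haN.neg
  calc X = 1 * X := (one_mul X).symm
    _ = (↑hu.unit⁻¹ * Polynomial.aeval N M.charpoly) * X := by
        rw [IsUnit.val_inv_mul]
    _ = 0 := by rw [mul_assoc, ← h1, mul_zero]

lemma sylvester_homog_zero_real {k : ℕ} (M N X : Matrix (Fin k) (Fin k) ℝ)
    (hdisj : matSpec M ∩ matSpec N = ∅)
    (h : X * M = N * X) : X = 0 := by
  have hmap : (X.map (algebraMap ℝ ℂ)) * (M.map (algebraMap ℝ ℂ)) =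
      (N.map (algebraMap ℝ ℂ)) * (X.map (algebraMap ℝ ℂ)) := by
    rw [← Matrix.map_mul, ← Matrix.map_mul, h]
  have := sylvester_homog_zero _ _ _ hdisj hmap
  ext i j
  have h0 := congrFun (congrFun this i) j
  simp only [Matrix.map_apply, Matrix.zero_apply] at h0 ⊢
  rw [show (algebraMap ℝ ℂ) (X i j) = ((X i j : ℝ) : ℂ) from rfl] at h0
  exact_mod_cast h0

/-- if Π solves ΠS = AΠ + BL with σ(S) ∩ σ(A) = ∅ and
σ(S) ∩ σ(S − GL) = ∅, then I is the unique solution P of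
PS = (S − GL)P + GL; hence the reduced model (S − GL, G, CΠ) has moment
(CΠ)·I = CΠ at (S, L), equal to the moment of the full-order system. -/
theorem reduced_model_matches_moment {n n' m p : ℕ}
    (A : Matrix (Fin n) (Fin n) ℝ) (B : Matrix (Fin n) (Fin m) ℝ)
    (C : Matrix (Fin p) (Fin n) ℝ)
    (S : Matrix (Fin n') (Fin n') ℝ) (L : Matrix (Fin m) (Fin n') ℝ)
    (G : Matrix (Fin n') (Fin m) ℝ)
    (Pi : Matrix (Fin n) (Fin n') ℝ)
    (hspec1 : matSpec S ∩ matSpec A = ∅)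
    (hspec2 : matSpec S ∩ matSpec (S - G * L) = ∅)
    (hPi : Pi * S = A * Pi + B * L) :
    (∃! P : Matrix (Fin n') (Fin n') ℝ, P * S = (S - G * L) * P + G * L) ∧
    ((1 : Matrix (Fin n') (Fin n') ℝ) * S =
        (S - G * L) * (1 : Matrix (Fin n') (Fin n') ℝ) + G * L) ∧
    (∀ P : Matrix (Fin n') (Fin n') ℝ,
        P * S = (S - G * L) * P + G * L → (C * Pi) * P = C * Pi) := by
  have hI : (1 : Matrix (Fin n') (Fin n') ℝ) * S =
      (S - G * L) * (1 : Matrix (Fin n') (Fin n') ℝ) + G * L := by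
    rw [one_mul, mul_one, sub_add_cancel]
  have huniq : ∀ P : Matrix (Fin n') (Fin n') ℝ,
      P * S = (S - G * L) * P + G * L → P = 1 := by
    intro P hP
    have hX : (P - 1) * S = (S - G * L) * (P - 1) := by
      rw [sub_mul, one_mul, hP, mul_sub, mul_one]
      noncomm_ring
    have := sylvester_homog_zero_real S (S - G * L) (P - 1) hspec2 hX
    rwa [sub_eq_zero] at this
  refine ⟨⟨1, hI, fun P hP => huniq P hP⟩, hI, fun P hP => ?_⟩
  rw [huniq P hP, Matrix.mul_one]
end

section
/- Let P be the unique solution of P F = A P + B L̂ (with σ(F) ∩ σ(A) = ∅), let K be such that σ(F) ∩ σ(A+BK) = ∅, and suppose (F, L̂) is observable. If ε ∈ ℂ^{n̂} is an eigenvector of F with F ε = λ ε and (L̂ − K P) ε = 0, then P ε = 0 and L̂ ε = 0, contradicting observability; hence no such eigenvector exists. -/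
open Matrix

private lemma scalar_sub_mulVec {k : ℕ} (M : Matrix (Fin k) (Fin k) ℂ) (μ : ℂ)
    (v : Fin k → ℂ) :
    (algebraMap ℂ (Matrix (Fin k) (Fin k) ℂ) μ - M).mulVec v = μ • v - M.mulVec v := by
  rw [Matrix.sub_mulVec, Algebra.algebraMap_eq_smul_one, Matrix.smul_mulVec,
    Matrix.one_mulVec]

private lemma mem_spectrum_of_eig {k : ℕ} (M : Matrix (Fin k) (Fin k) ℂ) (μ : ℂ)
    (v : Fin k → ℂ) (hv : v ≠ 0) (h : M.mulVec v = μ • v) :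
    μ ∈ spectrum ℂ M := by
  rw [spectrum.mem_iff]
  intro hU
  apply hv
  apply (Matrix.mulVec_injective_iff_isUnit.2 hU)
  rw [scalar_sub_mulVec, h, sub_self, Matrix.mulVec_zero]

/-- if P is the solution of PF = AP + BL̂ with σ(F) ∩ σ(A) = ∅,
σ(F) ∩ σ(A+BK) = ∅ and (F, L̂) observable, then no eigenvector ε of F satisfies
(L̂ − KP)ε = 0. -/
theorem no_unobservable_eigenvector {n n' m : ℕ}
    (A : Matrix (Fin n) (Fin n) ℝ) (B : Matrix (Fin n) (Fin m) ℝ)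
    (K : Matrix (Fin m) (Fin n) ℝ) (F : Matrix (Fin n') (Fin n') ℝ)
    (L : Matrix (Fin m) (Fin n') ℝ) (P : Matrix (Fin n) (Fin n') ℝ)
    (hspec1 : matSpec F ∩ matSpec A = ∅)
    (hspec2 : matSpec F ∩ matSpec (A + B * K) = ∅)
    (hP : P * F = A * P + B * L)
    (hobs : ∀ (μ : ℂ) (ε : Fin n' → ℂ), ε ≠ 0 →
        (F.map (algebraMap ℝ ℂ)).mulVec ε = μ • ε →
        (L.map (algebraMap ℝ ℂ)).mulVec ε ≠ 0) :
    ¬ ∃ (μ : ℂ) (ε : Fin n' → ℂ), ε ≠ 0 ∧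
        (F.map (algebraMap ℝ ℂ)).mulVec ε = μ • ε ∧
        ((L - K * P).map (algebraMap ℝ ℂ)).mulVec ε = 0 := by
  rintro ⟨μ, ε, hε, heig, hLKP⟩
  set f : ℝ →+* ℂ := algebraMap ℝ ℂ with hf
  -- complexified matrices
  set A' := A.map f
  set B' := B.map f
  set K' := K.map f
  set F' := F.map f
  set L' := L.map f
  set P' := P.map f
  -- complexified Sylvester equation
  have hP' : P' * F' = A' * P' + B' * L' := by
    have := congrArg (Matrix.map · (f : ℝ → ℂ)) hP
    simpa [Matrix.map_mul, Matrix.map_add] using this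
  -- the key relation: L'ε = K' (P' ε)
  have hL : L'.mulVec ε = K'.mulVec (P'.mulVec ε) := by
    have h1 : ((L - K * P).map f).mulVec ε
        = L'.mulVec ε - (K' * P').mulVec ε := by
      rw [show (L - K * P).map (f : ℝ → ℂ) = L' - K' * P' by
        simp [Matrix.map_sub, Matrix.map_mul]
        rfl]
      rw [Matrix.sub_mulVec]
    rw [h1] at hLKP
    rw [sub_eq_zero.mp hLKP, ← Matrix.mulVec_mulVec]
  -- (A'+B'K') (P' ε) = μ (P' ε)
  have hkey : ((A + B * K).map f).mulVec (P'.mulVec ε) = μ • (P'.mulVec ε) := by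
    have hmap : (A + B * K).map (f : ℝ → ℂ) = A' + B' * K' := by
      simp [Matrix.map_add, Matrix.map_mul]
      rfl
    rw [hmap]
    have h1 : (P' * F').mulVec ε = μ • (P'.mulVec ε) := by
      rw [← Matrix.mulVec_mulVec, heig, Matrix.mulVec_smul]
    rw [hP'] at h1
    rw [Matrix.add_mulVec] at h1 ⊢
    simp only [← Matrix.mulVec_mulVec] at h1 ⊢
    rwa [← hL]
  -- μ ∈ σ(F)
  have hμF : μ ∈ matSpec F := mem_spectrum_of_eig F' μ ε hε heig
  -- μ ∉ σ(A + BK)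
  have hμ2 : μ ∉ matSpec (A + B * K) := fun h =>
    Set.eq_empty_iff_forall_notMem.mp hspec2 μ ⟨hμF, h⟩
  -- hence the scalar matrix is a unit and P' ε = 0
  have hU : IsUnit (algebraMap ℂ (Matrix (Fin n) (Fin n) ℂ) μ - (A + B * K).map f) := by
    by_contra h
    exact hμ2 (spectrum.mem_iff.mpr h)
  have hPε : P'.mulVec ε = 0 := by
    apply Matrix.mulVec_injective_iff_isUnit.2 hU
    rw [scalar_sub_mulVec, hkey, sub_self, Matrix.mulVec_zero]
  exact hobs μ ε hε heig (by rw [hL, hPε, Matrix.mulVec_zero])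
end
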